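/- Let p be a probability measure on ℝ with mean 0, a > 0, and q⁺ the measure with dq⁺/dp(x) = 1 + min(1, max(−1, ax)). Then the extended squared Hellinger distance satisfies H²(p, q⁺) ≤ (1/2) ∫ min(1, (ax)²) dp = (a/2)(∫_{(−∞,−1/a]} (1/a) dp + a∫_{[−1/a,1/a]} x² dp + ∫_{[1/a,∞)} (1/a) dp) ≤ (a/2)(∫_{(−∞,−1/a]} (−x) dp + a∫_{[−1/a,1/a]} x² dp + ∫_{[1/a,∞)} x dp). -/

import Mathlib

/-!
Write `t = min 1 (max (-1) (a x))` for the clipped tilt and `s = √(1 + t)`. Since `s ≥ 0`,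
`(1 - s)² ≤ (1 - s)² (1 + s)² = (1 - s²)² = t²`, and `t² = min 1 ((a x)²)`, which gives the
first bound pointwise. Splitting the line at `±1/a` (where `p` has no atoms) turns
`min 1 ((a x)²)` into the constant `1` on the tails and `(a x)²` in the middle; finally
`1/a ≤ |x|` on the tails.
-/

open MeasureTheory Set

lemma sq_one_sub_sqrt_one_add_le_sq {t : ℝ} (ht : -1 ≤ t) : (1 - √(1 + t)) ^ 2 ≤ t ^ 2 := by
  have hs : 0 ≤ √(1 + t) := Real.sqrt_nonneg _
  have hss : √(1 + t) ^ 2 = 1 + t := Real.sq_sqrt (by linarith)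
  calc (1 - √(1 + t)) ^ 2
      ≤ (1 - √(1 + t)) ^ 2 * (1 + √(1 + t)) ^ 2 :=
        le_mul_of_one_le_right (sq_nonneg _) (one_le_pow₀ (by linarith))
    _ = (1 - √(1 + t) ^ 2) ^ 2 := by ring
    _ = t ^ 2 := by rw [hss]; ring

lemma min_one_sq_of_one_le_abs {y : ℝ} (hy : 1 ≤ |y|) : min 1 (y ^ 2) = 1 :=
  min_eq_left ((one_le_sq_iff_one_le_abs y).2 hy)

lemma min_one_sq_of_abs_le_one {y : ℝ} (hy : |y| ≤ 1) : min 1 (y ^ 2) = y ^ 2 :=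
  min_eq_right ((sq_le_one_iff_abs_le_one y).2 hy)

lemma sq_min_one_max_neg_one (y : ℝ) : min 1 (max (-1) y) ^ 2 = min 1 (y ^ 2) := by
  rcases le_total |y| 1 with hy | hy
  · rw [min_one_sq_of_abs_le_one hy, max_eq_right (neg_le_of_abs_le hy),
      min_eq_right (le_of_abs_le hy)]
  · rw [min_one_sq_of_one_le_abs hy]
    rcases le_abs'.1 hy with hy | hy
    · rw [max_eq_left hy, min_eq_right (by norm_num), neg_one_sq]
    · rw [max_eq_right (by linarith), min_eq_left hy, one_pow]

lemma sq_one_sub_sqrt_one_add_clip_le (y : ℝ) :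
    (1 - √(1 + min 1 (max (-1) y))) ^ 2 ≤ min 1 (y ^ 2) :=
  sq_min_one_max_neg_one y ▸
    sq_one_sub_sqrt_one_add_le_sq (le_min (by norm_num) (le_max_left _ _))

lemma integrable_min_one_sq {μ : Measure ℝ} [IsFiniteMeasure μ] (a : ℝ) :
    Integrable (fun x => min 1 ((a * x) ^ 2)) μ := by
  refine .of_bound (by fun_prop) 1 (.of_forall fun x => ?_)
  rw [Real.norm_of_nonneg (le_min zero_le_one (sq_nonneg _))]
  exact min_le_left _ _

lemma integral_eq_Iic_add_Icc_add_Ici {μ : Measure ℝ} {f : ℝ → ℝ} (hf : Integrable f μ)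
    {b c : ℝ} (hbc : b ≤ c) (hb : μ {b} = 0) (hc : μ {c} = 0) :
    ∫ x, f x ∂μ =
      (∫ x in Iic b, f x ∂μ) + (∫ x in Icc b c, f x ∂μ) + ∫ x in Ici c, f x ∂μ := by
  have hdisj : Disjoint (Ioc b c) (Ioi c) :=
    disjoint_left.2 fun _ hx hx' => (not_lt.2 hx.2) hx'
  rw [integral_Icc_eq_integral_Ioc' hb, integral_Ici_eq_integral_Ioi' hc, add_assoc,
    ← setIntegral_union hdisj measurableSet_Ioi hf.integrableOn hf.integrableOn,
    Ioc_union_Ioi_eq_Ioi hbc, intervalIntegral.integral_Iic_add_Ioi hf.integrableOn hf.integrableOn]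

theorem hellinger_tilted_bound_general (p : Measure ℝ) [IsProbabilityMeasure p]
    (hcont : ∀ x : ℝ, p {x} = 0)
    (hint : Integrable (fun x => x) p)
    (a : ℝ) (ha : 0 < a) :
    (1 / 2) * ∫ x, (1 - Real.sqrt (1 + min 1 (max (-1) (a * x)))) ^ 2 ∂p
        ≤ (1 / 2) * ∫ x, min 1 ((a * x) ^ 2) ∂p ∧
    (1 / 2) * ∫ x, min 1 ((a * x) ^ 2) ∂p
        = (a / 2) * ((∫ x in Set.Iic (-(1 / a)), (1 / a) ∂p)
            + a * (∫ x in Set.Icc (-(1 / a)) (1 / a), x ^ 2 ∂p)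
            + ∫ x in Set.Ici (1 / a), (1 / a) ∂p) ∧
    (a / 2) * ((∫ x in Set.Iic (-(1 / a)), (1 / a) ∂p)
            + a * (∫ x in Set.Icc (-(1 / a)) (1 / a), x ^ 2 ∂p)
            + ∫ x in Set.Ici (1 / a), (1 / a) ∂p)
        ≤ (a / 2) * ((∫ x in Set.Iic (-(1 / a)), (-x) ∂p)
            + a * (∫ x in Set.Icc (-(1 / a)) (1 / a), x ^ 2 ∂p)
            + ∫ x in Set.Ici (1 / a), x ∂p) := by
  have habs (x : ℝ) : |a * x| = a * |x| := by rw [abs_mul, abs_of_pos ha]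
  have htail {x : ℝ} (hx : 1 / a ≤ |x|) : min 1 ((a * x) ^ 2) = a * (1 / a) := by
    rw [min_one_sq_of_one_le_abs (by rwa [habs, ← div_le_iff₀' ha]), mul_one_div_cancel ha.ne']
  have hcenter {x : ℝ} (hx : |x| ≤ 1 / a) : min 1 ((a * x) ^ 2) = a * (a * x ^ 2) := by
    rw [min_one_sq_of_abs_le_one (by rwa [habs, ← le_div_iff₀' ha])]
    ring
  refine ⟨?_, ?_, ?_⟩
  · refine mul_le_mul_of_nonneg_left ?_ (by norm_num)
    exact integral_mono_of_nonneg (.of_forall fun _ => by positivity) (integrable_min_one_sq a)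
      (.of_forall fun _ => sq_one_sub_sqrt_one_add_clip_le _)
  · have hsym : -(1 / a) ≤ 1 / a := neg_le_self (one_div_pos.2 ha).le
    rw [integral_eq_Iic_add_Icc_add_Ici (integrable_min_one_sq a) hsym (hcont _) (hcont _),
      setIntegral_congr_fun measurableSet_Iic
        fun x (hx : x ≤ -(1 / a)) => htail (le_abs'.2 (.inl hx)),
      setIntegral_congr_fun measurableSet_Icc
        fun x (hx : -(1 / a) ≤ x ∧ x ≤ 1 / a) => hcenter (abs_le.2 hx),
      setIntegral_congr_fun measurableSet_Ici
        fun x (hx : 1 / a ≤ x) => htail (le_abs'.2 (.inr hx))]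
    simp only [integral_const_mul]
    ring
  · refine mul_le_mul_of_nonneg_left (add_le_add (add_le_add ?_ le_rfl) ?_) (by positivity)
    · exact setIntegral_mono_on (integrableOn_const (measure_ne_top _ _)) hint.neg.integrableOn
        measurableSet_Iic fun x hx => le_neg_of_le_neg hx
    · exact setIntegral_mono_on (integrableOn_const (measure_ne_top _ _)) hint.integrableOn
        measurableSet_Ici fun x hx => hx

/-- The extended squared Hellinger distance between a (atomless) mean-zero probability
measure `p` and the tilted measure `q⁺` with density `1 + min 1 (max (-1) (a x))` is at most
`(1/2) ∫ min(1,(ax)²) dp`, which equals and is bounded by the displayed tail/central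
integrals. -/
theorem hellinger_tilted_bound (p : Measure ℝ) [IsProbabilityMeasure p]
    (hcont : ∀ x : ℝ, p {x} = 0)
    (hint : Integrable (fun x => x) p) (hmean : ∫ x, x ∂p = 0)
    (a : ℝ) (ha : 0 < a) :
    (1 / 2) * ∫ x, (1 - Real.sqrt (1 + min 1 (max (-1) (a * x)))) ^ 2 ∂p
        ≤ (1 / 2) * ∫ x, min 1 ((a * x) ^ 2) ∂p ∧
    (1 / 2) * ∫ x, min 1 ((a * x) ^ 2) ∂p
        = (a / 2) * ((∫ x in Set.Iic (-(1 / a)), (1 / a) ∂p)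
            + a * (∫ x in Set.Icc (-(1 / a)) (1 / a), x ^ 2 ∂p)
            + ∫ x in Set.Ici (1 / a), (1 / a) ∂p) ∧
    (a / 2) * ((∫ x in Set.Iic (-(1 / a)), (1 / a) ∂p)
            + a * (∫ x in Set.Icc (-(1 / a)) (1 / a), x ^ 2 ∂p)
            + ∫ x in Set.Ici (1 / a), (1 / a) ∂p)
        ≤ (a / 2) * ((∫ x in Set.Iic (-(1 / a)), (-x) ∂p)
            + a * (∫ x in Set.Icc (-(1 / a)) (1 / a), x ^ 2 ∂p)
            + ∫ x in Set.Ici (1 / a), x ∂p) :=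
  hellinger_tilted_bound_general p hcont hint a ha
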